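/- arXiv:2302.12302 — 2 statements merged into one kernel-verified Lean document; each statement's English description precedes it below -/
import Mathlib

section
/- For t < n, the dyadic Fejér kernel satisfies: K_{2^n}(x) = 2^{t−1} if x ∈ I_n(e_t) (i.e. x ∈ I_t \ I_{t+1} with x_t = 1 and x_j = 0 for all other j < n); K_{2^n}(x) = (2^n + 1)/2 if x ∈ I_n; and K_{2^n}(x) = 0 otherwise. -/
open MeasureTheory Finset

/-- The Walsh group `G = (ℤ/2)^ℕ`. -/
abbrev G : Type := ℕ → ZMod 2

instance : TopologicalSpace (ZMod 2) := ⊥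
instance : DiscreteTopology (ZMod 2) := ⟨rfl⟩
noncomputable instance : MeasurableSpace G := borel G
instance : BorelSpace G := ⟨rfl⟩

/-- The normalized Haar measure on `G`. -/
noncomputable def μ : Measure G :=
  Measure.addHaarMeasure (⊤ : TopologicalSpace.PositiveCompacts G)

/-- Rademacher functions. -/
noncomputable def rad (k : ℕ) (x : G) : ℝ := (-1 : ℝ) ^ (x k).val

/-- Walsh–Paley functions. -/
noncomputable def walsh (n : ℕ) (x : G) : ℝ :=
  ∏ k ∈ Finset.range n, rad k x ^ (n.testBit k).toNat

/-- Walsh–Dirichlet kernels `D_n = ∑_{k<n} w_k`. -/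
noncomputable def dirichlet (n : ℕ) (x : G) : ℝ := ∑ k ∈ Finset.range n, walsh k x

/-- Walsh–Fejér kernels `K_n = (1/n) ∑_{k=1}^n D_k`. -/
noncomputable def fejer (n : ℕ) (x : G) : ℝ :=
  (1 / (n : ℝ)) * ∑ k ∈ Finset.range n, dirichlet (k + 1) x

/-- The cylinder `I_n(x) = {y : y_j = x_j for j < n}`. -/
def cyl (n : ℕ) (x : G) : Set G := {y | ∀ j < n, y j = x j}

/-- `I_n = I_n(0)`. -/
def I (n : ℕ) : Set G := cyl n 0

/-- `e_k` has a `1` in coordinate `k` and `0` elsewhere. -/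
def e (k : ℕ) : G := fun j => if j = k then 1 else 0

/-- Walsh–Fourier coefficients. -/
noncomputable def fcoef (f : G → ℝ) (n : ℕ) : ℝ := ∫ x, f x * walsh n x ∂μ

/-- Walsh partial sums. -/
noncomputable def partialSum (f : G → ℝ) (n : ℕ) (x : G) : ℝ :=
  ∑ k ∈ Finset.range n, fcoef f k * walsh k x

/-- Fejér means `σ_n f = (1/n) ∑_{k=1}^n S_k f`. -/
noncomputable def fejerMean (f : G → ℝ) (n : ℕ) (x : G) : ℝ :=
  (1 / (n : ℝ)) * ∑ k ∈ Finset.range n, partialSum f (k + 1) x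

/-! For `k < 2^n` the Walsh function `w_k` is `∏_{j<n} r_j^{k_j}` with `r_j = rad j` and `k_j` the
binary digits of `k`. Summing by parts, `K_{2^n} = D_{2^n} - 2^{-n} ∑_{k<2^n} k w_k`, and expanding
both sums over the digits gives `D_{2^n} = ∏_{j<n} (1 + r_j)` and
`∑_{k<2^n} k w_k = ∑_{m<n} 2^m r_m ∏_{j<n, j≠m} (1 + r_j)`. Since `r_j(x) = ±1`, the factor
`1 + r_j` vanishes exactly when `x_j = 1`, so everything is decided by how many of
`x_0, …, x_{n-1}` equal `1`: none, exactly one, or at least two. -/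

theorem sum_range_sum_range_succ {R : Type*} [CommRing R] (a : ℕ → R) (N : ℕ) :
    ∑ m ∈ range N, ∑ k ∈ range (m + 1), a k = ∑ k ∈ range N, ((N : R) - k) * a k := by
  induction N with
  | zero => simp
  | succ N ih =>
    have shift : ∑ k ∈ range N, (((N + 1 : ℕ) : R) - k) * a k
        = ∑ k ∈ range N, (((N : R) - k) * a k + a k) :=
      sum_congr rfl fun k _ => by push_cast; ring
    rw [sum_range_succ, ih, sum_range_succ (fun k => (((N + 1 : ℕ) : R) - k) * a k), shift,
      sum_add_distrib, sum_range_succ a]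
    push_cast
    ring

theorem sum_range_two_pow_succ {M : Type*} [AddCommMonoid M] (f : ℕ → M) (n : ℕ) :
    ∑ k ∈ range (2 ^ (n + 1)), f k = ∑ k ∈ range (2 ^ n), (f k + f (2 ^ n + k)) := by
  rw [pow_succ, mul_two, sum_range_add, sum_add_distrib]

theorem rad_of_eq_zero {x : G} {j : ℕ} (h : x j = 0) : rad j x = 1 := by
  simp [rad, h]

theorem rad_of_eq_one {x : G} {j : ℕ} (h : x j = 1) : rad j x = -1 := by
  simp [rad, h, ZMod.val_one]

theorem walsh_eq_prod_range {k m : ℕ} (hk : k < 2 ^ m) (x : G) :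
    walsh k x = ∏ j ∈ range m, rad j x ^ (k.testBit j).toNat := by
  have extend : ∀ {l}, k < 2 ^ l → l ≤ k + m →
      ∏ j ∈ range (k + m), rad j x ^ (k.testBit j).toNat
        = ∏ j ∈ range l, rad j x ^ (k.testBit j).toNat := fun hkl hl =>
    (prod_subset (range_subset_range.mpr hl) fun j _ hj => by
      rw [Nat.testBit_eq_false_of_lt (hkl.trans_le (Nat.pow_le_pow_right two_pos
        (not_lt.mp (mem_range.not.mp hj))))]
      simp).symm
  rw [walsh, ← extend Nat.lt_two_pow_self (by omega), extend hk (by omega)]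

theorem walsh_two_pow_add {n k : ℕ} (hk : k < 2 ^ n) (x : G) :
    walsh (2 ^ n + k) x = rad n x * walsh k x := by
  rw [walsh_eq_prod_range (by rw [pow_succ]; omega : 2 ^ n + k < 2 ^ (n + 1)),
    walsh_eq_prod_range hk, prod_range_succ, Nat.testBit_two_pow_add_eq,
    Nat.testBit_eq_false_of_lt hk, mul_comm]
  congr 1
  · simp
  · exact prod_congr rfl fun j hj => by rw [Nat.testBit_two_pow_add_gt (mem_range.mp hj)]

theorem dirichlet_two_pow (n : ℕ) (x : G) :
    dirichlet (2 ^ n) x = ∏ j ∈ range n, (1 + rad j x) := by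
  induction n with
  | zero => simp [dirichlet, walsh]
  | succ n ih =>
    rw [dirichlet, sum_range_two_pow_succ, prod_range_succ, ← ih, dirichlet, mul_comm,
      add_mul, one_mul, mul_sum, ← sum_add_distrib]
    exact sum_congr rfl fun k hk => by rw [walsh_two_pow_add (mem_range.mp hk)]

theorem sum_range_two_pow_mul_walsh (n : ℕ) (x : G) :
    ∑ k ∈ range (2 ^ n), (k : ℝ) * walsh k x
      = ∑ m ∈ range n, 2 ^ m * rad m x * ∏ j ∈ (range n).erase m, (1 + rad j x) := by
  induction n with
  | zero => simp
  | succ n ih =>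
    have lhs : ∑ k ∈ range (2 ^ (n + 1)), (k : ℝ) * walsh k x
        = (1 + rad n x) * ∑ k ∈ range (2 ^ n), (k : ℝ) * walsh k x
          + 2 ^ n * rad n x * ∏ j ∈ range n, (1 + rad j x) := by
      rw [sum_range_two_pow_succ, ← dirichlet_two_pow, dirichlet, mul_sum, mul_sum,
        ← sum_add_distrib]
      refine sum_congr rfl fun k hk => ?_
      rw [walsh_two_pow_add (mem_range.mp hk)]
      push_cast
      ring
    have rhs : ∑ m ∈ range (n + 1), 2 ^ m * rad m x * ∏ j ∈ (range (n + 1)).erase m, (1 + rad j x)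
        = (1 + rad n x) * ∑ m ∈ range n, 2 ^ m * rad m x * ∏ j ∈ (range n).erase m, (1 + rad j x)
          + 2 ^ n * rad n x * ∏ j ∈ range n, (1 + rad j x) := by
      rw [sum_range_succ, range_add_one, erase_insert notMem_range_self, mul_sum]
      congr 1
      refine sum_congr rfl fun m hm => ?_
      rw [erase_insert_of_ne (by simp at hm; omega), prod_insert (by simp)]
      ring
    rw [lhs, rhs, ih]

theorem fejer_two_pow (n : ℕ) (x : G) :
    fejer (2 ^ n) x = dirichlet (2 ^ n) x
      - (∑ k ∈ range (2 ^ n), (k : ℝ) * walsh k x) / 2 ^ n := by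
  have h2n : (2 : ℝ) ^ n ≠ 0 := by positivity
  simp only [fejer, dirichlet, sum_range_sum_range_succ, sub_mul, sum_sub_distrib, ← mul_sum]
  push_cast
  field_simp

theorem prod_one_add_rad_eq_zero {s : Finset ℕ} {x : G} {t : ℕ} (ht : t ∈ s) (hxt : x t = 1) :
    ∏ j ∈ s, (1 + rad j x) = 0 :=
  prod_eq_zero ht (by rw [rad_of_eq_one hxt]; ring)

theorem prod_one_add_rad_of_eq_zero {s : Finset ℕ} {x : G} (h : ∀ j ∈ s, x j = 0) :
    ∏ j ∈ s, (1 + rad j x) = 2 ^ s.card := by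
  rw [prod_congr rfl fun j hj => by rw [rad_of_eq_zero (h j hj)], prod_const]
  norm_num

theorem two_pow_card_erase_range {n t : ℕ} (ht : t < n) :
    (2 : ℝ) ^ ((range n).erase t).card = 2 ^ n / 2 := by
  rw [card_erase_of_mem (mem_range.mpr ht), card_range, eq_div_iff two_ne_zero, ← pow_succ,
    Nat.sub_add_cancel (by omega)]

theorem fejer_two_pow_of_mem_I {n : ℕ} {x : G} (hx : x ∈ I n) :
    fejer (2 ^ n) x = ((2 : ℝ) ^ n + 1) / 2 := by
  have hzero : ∀ j ∈ range n, x j = 0 := fun j hj => hx j (mem_range.mp hj)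
  have hterm : ∀ m ∈ range n, 2 ^ m * rad m x * ∏ j ∈ (range n).erase m, (1 + rad j x)
      = 2 ^ m * (2 ^ n / 2) := fun m hm => by
    rw [rad_of_eq_zero (hzero m hm),
      prod_one_add_rad_of_eq_zero fun j hj => hzero j (mem_of_mem_erase hj),
      two_pow_card_erase_range (mem_range.mp hm), mul_one]
  rw [fejer_two_pow, dirichlet_two_pow, sum_range_two_pow_mul_walsh,
    prod_one_add_rad_of_eq_zero hzero, card_range, sum_congr rfl hterm, ← sum_mul,
    geom_sum_eq (by norm_num)]
  field_simp
  ring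

theorem fejer_two_pow_of_mem_cyl_e {n t : ℕ} {x : G} (ht : t < n) (hx : x ∈ cyl n (e t)) :
    fejer (2 ^ n) x = (2 : ℝ) ^ t / 2 := by
  have hxt : x t = 1 := by simpa [e] using hx t ht
  have hzero : ∀ j ∈ (range n).erase t, x j = 0 := fun j hj => by
    obtain ⟨hjt, hjn⟩ := mem_erase.mp hj
    simpa [e, hjt] using hx j (mem_range.mp hjn)
  have hterm : ∀ m ∈ range n, m ≠ t →
      2 ^ m * rad m x * ∏ j ∈ (range n).erase m, (1 + rad j x) = 0 := fun m _ hmt => by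
    rw [prod_one_add_rad_eq_zero (mem_erase.mpr ⟨Ne.symm hmt, mem_range.mpr ht⟩) hxt, mul_zero]
  rw [fejer_two_pow, dirichlet_two_pow, sum_range_two_pow_mul_walsh,
    prod_one_add_rad_eq_zero (mem_range.mpr ht) hxt,
    sum_eq_single_of_mem t (mem_range.mpr ht) hterm,
    rad_of_eq_one hxt, prod_one_add_rad_of_eq_zero hzero, two_pow_card_erase_range ht]
  field_simp
  ring

theorem fejer_two_pow_of_two_ones {n a b : ℕ} {x : G} (ha : a < n) (hb : b < n) (hab : a ≠ b)
    (hxa : x a = 1) (hxb : x b = 1) : fejer (2 ^ n) x = 0 := by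
  have hterm : ∀ m ∈ range n, 2 ^ m * rad m x * ∏ j ∈ (range n).erase m, (1 + rad j x) = 0 := by
    intro m _
    obtain ⟨c, hc, hxc⟩ : ∃ c ∈ (range n).erase m, x c = 1 := by
      by_cases hma : m = a
      · exact ⟨b, mem_erase.mpr ⟨by omega, mem_range.mpr hb⟩, hxb⟩
      · exact ⟨a, mem_erase.mpr ⟨Ne.symm hma, mem_range.mpr ha⟩, hxa⟩
    rw [prod_one_add_rad_eq_zero hc hxc, mul_zero]
  rw [fejer_two_pow, dirichlet_two_pow, sum_range_two_pow_mul_walsh,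
    prod_one_add_rad_eq_zero (mem_range.mpr ha) hxa, sum_eq_zero hterm]
  simp

theorem exists_two_ones_of_notMem_I_cyl {n : ℕ} {x : G} (hI : x ∉ I n)
    (hcyl : ∀ t < n, x ∉ cyl n (e t)) : ∃ a < n, ∃ b < n, a ≠ b ∧ x a = 1 ∧ x b = 1 := by
  obtain ⟨a, ha, hxa⟩ : ∃ a < n, x a ≠ 0 := by simpa [I, cyl] using hI
  replace hxa : x a = 1 := Fin.eq_one_of_ne_zero _ hxa
  obtain ⟨b, hb, hxb⟩ : ∃ b < n, x b ≠ e a b := by simpa [cyl] using hcyl a ha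
  have hab : a ≠ b := by rintro rfl; simp [e, hxa] at hxb
  have hxb0 : x b ≠ 0 := fun h => hxb (by simp [e, h, Ne.symm hab])
  exact ⟨a, ha, b, hb, hab, hxa, Fin.eq_one_of_ne_zero _ hxb0⟩

/-- values of the dyadic Fejér kernel `K_{2^n}`. -/
theorem fejer_dyadic (n : ℕ) (x : G) :
    (∀ t < n, x ∈ cyl n (e t) → fejer (2 ^ n) x = (2 : ℝ) ^ t / 2) ∧
    (x ∈ I n → fejer (2 ^ n) x = ((2 : ℝ) ^ n + 1) / 2) ∧
    (x ∉ I n → (∀ t < n, x ∉ cyl n (e t)) → fejer (2 ^ n) x = 0) := by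
  refine ⟨fun t ht hx => fejer_two_pow_of_mem_cyl_e ht hx, fejer_two_pow_of_mem_I,
    fun hI hcyl => ?_⟩
  obtain ⟨a, ha, b, hb, hab, hxa, hxb⟩ := exists_two_ones_of_notMem_I_cyl hI hcyl
  exact fejer_two_pow_of_two_ones ha hb hab hxa hxb
end

section
/- Let n = Σ_{i=1}^{s} Σ_{k=l_i}^{t_i} 2^k where t_1 ≥ l_1 and l_i − 2 ≥ t_{i+1} ≥ l_{i+1} for each i (blocks of consecutive binary digits separated by at least one zero). Then there is an absolute constant c such that |n K_n(x)| ≤ c Σ_{A=1}^{s} (2^{l_A} K_{2^{l_A}}(x) + 2^{t_A} K_{2^{t_A}}(x) + 2^{l_A} Σ_{k=l_A}^{t_A} D_{2^k}(x)) for all x ∈ G. -/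
open MeasureTheory Finset

/-!
Write `S n = n K_n = ∑_{k=1}^n D_k`. If `2 ^ k ∣ a` and `j ≤ 2 ^ k`, then `w_{a+i} = w_a w_i` for
`i < j`, so `S (a + j) = S a + j D_a + w_a S j`. A block `B = 2 ^ l + ⋯ + 2 ^ t` satisfies
`B + 2 ^ l = 2 ^ (t + 1)`, so this identity expresses `S B` and `D_B` through the nonnegative
dyadic kernels at `2 ^ l` and `2 ^ (t + 1)`; the recursions `D_{2^(k+1)} = (1 + r_k) D_{2^k}` and
`S (2 ^ (k + 1)) = (1 + r_k) S (2 ^ k) + 2 ^ k D_{2^k}` bring `2 ^ (t + 1)` down to `2 ^ t`.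
Splitting `n` into its top block and a tail below `2 ^ l`, induction on the number of blocks gives
the estimate with `c = 6`.
-/

namespace Walsh

lemma rad_eq_one_or_neg_one (k : ℕ) (x : G) : rad k x = 1 ∨ rad k x = -1 := by
  unfold rad
  have h := ZMod.val_lt (x k)
  interval_cases (x k).val <;> simp

lemma walsh_eq_prod_range_of_le {n M : ℕ} (h : n ≤ M) (x : G) :
    walsh n x = ∏ i ∈ range M, rad i x ^ (n.testBit i).toNat := by
  refine prod_subset (range_subset_range.2 h) fun i _ hi => ?_
  have hni : n < 2 ^ i := n.lt_two_pow_self.trans_le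
    (Nat.pow_le_pow_right two_pos (not_lt.1 (by simpa using hi)))
  simp [Nat.testBit_lt_two_pow hni]

lemma testBit_toNat_add {k m j : ℕ} (hj : j < 2 ^ k) (i : ℕ) :
    ((2 ^ k * m + j).testBit i).toNat = ((2 ^ k * m).testBit i).toNat + (j.testBit i).toNat := by
  rw [Nat.testBit_two_pow_mul_add m hj, Nat.testBit_two_pow_mul]
  rcases lt_or_ge i k with hik | hik
  · simp [hik, not_le.2 hik]
  · simp [not_lt.2 hik, hik,
      Nat.testBit_lt_two_pow (hj.trans_le (Nat.pow_le_pow_right two_pos hik))]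

lemma walsh_add {k a j : ℕ} (ha : 2 ^ k ∣ a) (hj : j < 2 ^ k) (x : G) :
    walsh (a + j) x = walsh a x * walsh j x := by
  obtain ⟨m, rfl⟩ := ha
  rw [walsh_eq_prod_range_of_le le_rfl, walsh_eq_prod_range_of_le (Nat.le_add_right _ j),
    walsh_eq_prod_range_of_le (Nat.le_add_left j _), ← prod_mul_distrib]
  exact prod_congr rfl fun i _ => by rw [testBit_toNat_add hj, pow_add]

lemma walsh_two_pow (k : ℕ) (x : G) : walsh (2 ^ k) x = rad k x := by
  rw [walsh_eq_prod_range_of_le le_rfl, prod_eq_single_of_mem k (mem_range.2 k.lt_two_pow_self)]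
  · simp
  · intro i _ hik
    simp [Nat.testBit_two_pow_of_ne (Ne.symm hik)]

lemma abs_walsh (n : ℕ) (x : G) : |walsh n x| = 1 := by
  rw [walsh, abs_prod]
  refine prod_eq_one fun i _ => ?_
  rcases rad_eq_one_or_neg_one i x with hr | hr <;> simp [hr]

lemma dirichlet_add {k a j : ℕ} (ha : 2 ^ k ∣ a) (hj : j ≤ 2 ^ k) (x : G) :
    dirichlet (a + j) x = dirichlet a x + walsh a x * dirichlet j x := by
  rw [dirichlet, dirichlet, dirichlet, sum_range_add, mul_sum]
  congr 1
  exact sum_congr rfl fun i hi => walsh_add ha ((mem_range.1 hi).trans_le hj) x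

lemma dirichlet_two_pow_succ (k : ℕ) (x : G) :
    dirichlet (2 ^ (k + 1)) x = (1 + rad k x) * dirichlet (2 ^ k) x := by
  rw [pow_succ, mul_two, dirichlet_add dvd_rfl le_rfl, walsh_two_pow]
  ring

/-- `n K_n`, kept free of the division in `fejer`. -/
noncomputable def dirichletSum (n : ℕ) (x : G) : ℝ := ∑ k ∈ range n, dirichlet (k + 1) x

lemma natCast_mul_fejer (n : ℕ) (x : G) : (n : ℝ) * fejer n x = dirichletSum n x := by
  rcases n.eq_zero_or_pos with rfl | hn
  · simp [dirichletSum]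
  · rw [fejer, dirichletSum, ← mul_assoc, mul_one_div_cancel (by positivity), one_mul]

lemma two_pow_mul_fejer_two_pow (k : ℕ) (x : G) :
    (2 : ℝ) ^ k * fejer (2 ^ k) x = dirichletSum (2 ^ k) x := by
  exact_mod_cast natCast_mul_fejer (2 ^ k) x

lemma dirichletSum_add {k a j : ℕ} (ha : 2 ^ k ∣ a) (hj : j ≤ 2 ^ k) (x : G) :
    dirichletSum (a + j) x =
      dirichletSum a x + j * dirichlet a x + walsh a x * dirichletSum j x := by
  have hstep : ∀ i ∈ range j,
      dirichlet (a + i + 1) x = dirichlet a x + walsh a x * dirichlet (i + 1) x :=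
    fun i hi => dirichlet_add ha ((mem_range.1 hi).trans_le hj) x
  rw [dirichletSum, sum_range_add, sum_congr rfl hstep, sum_add_distrib, sum_const, card_range,
    nsmul_eq_mul, ← mul_sum, ← add_assoc]
  rfl

lemma dirichletSum_two_pow_succ (k : ℕ) (x : G) :
    dirichletSum (2 ^ (k + 1)) x =
      (1 + rad k x) * dirichletSum (2 ^ k) x + 2 ^ k * dirichlet (2 ^ k) x := by
  rw [pow_succ, mul_two, dirichletSum_add dvd_rfl le_rfl, walsh_two_pow]
  push_cast
  ring

lemma dirichlet_two_pow_nonneg (k : ℕ) (x : G) : 0 ≤ dirichlet (2 ^ k) x := by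
  induction k with
  | zero => simp [dirichlet, walsh]
  | succ k ih =>
    rw [dirichlet_two_pow_succ]
    rcases rad_eq_one_or_neg_one k x with hr | hr <;> rw [hr] <;> linarith

lemma dirichlet_two_pow_succ_le (k : ℕ) (x : G) :
    dirichlet (2 ^ (k + 1)) x ≤ 2 * dirichlet (2 ^ k) x := by
  have := dirichlet_two_pow_nonneg k x
  rw [dirichlet_two_pow_succ]
  rcases rad_eq_one_or_neg_one k x with hr | hr <;> rw [hr] <;> linarith

lemma dirichletSum_two_pow_nonneg (k : ℕ) (x : G) : 0 ≤ dirichletSum (2 ^ k) x := by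
  induction k with
  | zero => simp [dirichletSum, dirichlet, walsh]
  | succ k ih =>
    have := dirichlet_two_pow_nonneg k x
    rw [dirichletSum_two_pow_succ]
    rcases rad_eq_one_or_neg_one k x with hr | hr <;> rw [hr] <;> positivity

lemma two_pow_mul_dirichlet_two_pow_le (k : ℕ) (x : G) :
    2 ^ k * dirichlet (2 ^ k) x ≤ 2 * dirichletSum (2 ^ k) x := by
  induction k with
  | zero => simp [dirichletSum, dirichlet, walsh]
  | succ k ih =>
    have := dirichlet_two_pow_nonneg k x
    have := dirichletSum_two_pow_nonneg k x
    rw [dirichletSum_two_pow_succ, dirichlet_two_pow_succ, pow_succ]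
    rcases rad_eq_one_or_neg_one k x with hr | hr <;> rw [hr] <;>
      nlinarith [pow_pos (two_pos (α := ℝ)) k]

lemma dirichletSum_two_pow_succ_le (k : ℕ) (x : G) :
    dirichletSum (2 ^ (k + 1)) x ≤ 4 * dirichletSum (2 ^ k) x := by
  have := dirichletSum_two_pow_nonneg k x
  have := two_pow_mul_dirichlet_two_pow_le k x
  rw [dirichletSum_two_pow_succ]
  rcases rad_eq_one_or_neg_one k x with hr | hr <;> rw [hr] <;> linarith

lemma abs_dirichletSum_add_le {k a j : ℕ} (ha : 2 ^ k ∣ a) (hj : j ≤ 2 ^ k) (x : G) :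
    |dirichletSum (a + j) x| ≤ |dirichletSum a x| + j * |dirichlet a x| + |dirichletSum j x| := by
  rw [dirichletSum_add ha hj]
  refine (abs_add_three _ _ _).trans_eq ?_
  rw [abs_mul, abs_mul, Nat.abs_cast, abs_walsh, one_mul]

def binaryBlock (l t : ℕ) : ℕ := ∑ k ∈ Icc l t, 2 ^ k

lemma binaryBlock_add_two_pow {l t : ℕ} (h : l ≤ t) : binaryBlock l t + 2 ^ l = 2 ^ (t + 1) := by
  induction t, h using Nat.le_induction with
  | base => simp [binaryBlock, pow_succ, mul_two]
  | succ t hlt ih =>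
    rw [binaryBlock, sum_Icc_succ_top (by omega), add_right_comm, ← binaryBlock, ih,
      pow_succ 2 (t + 1), mul_two]

lemma two_pow_dvd_binaryBlock (l t : ℕ) : 2 ^ l ∣ binaryBlock l t :=
  dvd_sum fun _ hk => pow_dvd_pow 2 (mem_Icc.1 hk).1

lemma sum_binaryBlock_lt_two_pow {s m : ℕ} {l t : ℕ → ℕ} (hlt : ∀ i < s, l i ≤ t i)
    (hgap : ∀ i, i + 1 < s → t (i + 1) < l i) (hm : 0 < s → t 0 < m) :
    ∑ i ∈ range s, binaryBlock (l i) (t i) < 2 ^ m := by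
  induction s generalizing l t m with
  | zero => simp
  | succ s ih =>
    have hrest : ∑ i ∈ range s, binaryBlock (l (i + 1)) (t (i + 1)) < 2 ^ l 0 :=
      ih (fun i hi => hlt (i + 1) (by omega)) (fun i hi => hgap (i + 1) (by omega))
        (fun hs => hgap 0 (by omega))
    have htop : 2 ^ (t 0 + 1) ≤ 2 ^ m := Nat.pow_le_pow_right two_pos (hm s.succ_pos)
    have := binaryBlock_add_two_pow (hlt 0 s.succ_pos)
    rw [sum_range_succ']
    omega

lemma dirichletSum_binaryBlock {l t : ℕ} (h : l ≤ t) (x : G) :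
    dirichletSum (binaryBlock l t) x =
      dirichletSum (2 ^ (t + 1)) x - 2 ^ l * dirichlet (2 ^ (t + 1)) x +
        walsh (binaryBlock l t) x * (2 ^ l * dirichlet (2 ^ l) x - dirichletSum (2 ^ l) x) := by
  rw [← binaryBlock_add_two_pow h, dirichletSum_add (two_pow_dvd_binaryBlock l t) le_rfl,
    dirichlet_add (two_pow_dvd_binaryBlock l t) le_rfl]
  push_cast
  ring

lemma abs_dirichlet_binaryBlock_le {l t : ℕ} (h : l ≤ t) (x : G) :
    |dirichlet (binaryBlock l t) x| ≤ 2 * dirichlet (2 ^ t) x + dirichlet (2 ^ l) x := by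
  have hsplit := dirichlet_add (two_pow_dvd_binaryBlock l t) le_rfl x
  rw [binaryBlock_add_two_pow h] at hsplit
  rw [eq_sub_of_add_eq hsplit.symm]
  refine (abs_sub _ _).trans ?_
  rw [abs_mul, abs_walsh, one_mul, abs_of_nonneg (dirichlet_two_pow_nonneg _ x),
    abs_of_nonneg (dirichlet_two_pow_nonneg _ x)]
  linarith [dirichlet_two_pow_succ_le t x]

lemma abs_dirichletSum_binaryBlock_le {l t : ℕ} (h : l ≤ t) (x : G) :
    |dirichletSum (binaryBlock l t) x| ≤ 4 * dirichletSum (2 ^ t) x +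
      2 * 2 ^ l * dirichlet (2 ^ t) x + 2 ^ l * dirichlet (2 ^ l) x + dirichletSum (2 ^ l) x := by
  have hDt1 : 2 ^ l * dirichlet (2 ^ (t + 1)) x ≤ 2 * 2 ^ l * dirichlet (2 ^ t) x := by
    nlinarith [dirichlet_two_pow_succ_le t x, pow_pos (two_pos (α := ℝ)) l]
  have habs {a b : ℝ} (ha : 0 ≤ a) (hb : 0 ≤ b) : |a - b| ≤ a + b := by
    rw [abs_le]; constructor <;> linarith
  have hDl : 0 ≤ 2 ^ l * dirichlet (2 ^ l) x := by
    have := dirichlet_two_pow_nonneg l x; positivity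
  have hDt : 0 ≤ 2 ^ l * dirichlet (2 ^ (t + 1)) x := by
    have := dirichlet_two_pow_nonneg (t + 1) x; positivity
  rw [dirichletSum_binaryBlock h]
  calc _ ≤ |dirichletSum (2 ^ (t + 1)) x - 2 ^ l * dirichlet (2 ^ (t + 1)) x| +
        |walsh (binaryBlock l t) x| * |2 ^ l * dirichlet (2 ^ l) x - dirichletSum (2 ^ l) x| := by
        rw [← abs_mul]; exact abs_add_le _ _
    _ ≤ (dirichletSum (2 ^ (t + 1)) x + 2 ^ l * dirichlet (2 ^ (t + 1)) x) +
        (2 ^ l * dirichlet (2 ^ l) x + dirichletSum (2 ^ l) x) := by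
        rw [abs_walsh, one_mul]
        exact add_le_add (habs (dirichletSum_two_pow_nonneg _ x) hDt)
          (habs hDl (dirichletSum_two_pow_nonneg _ x))
    _ ≤ _ := by linarith [dirichletSum_two_pow_succ_le t x]

/-- The summand of the right-hand side, with `2 ^ m K_{2 ^ m}` written as `dirichletSum (2 ^ m)`. -/
noncomputable def blockMajorant (l t : ℕ) (x : G) : ℝ :=
  dirichletSum (2 ^ l) x + dirichletSum (2 ^ t) x + 2 ^ l * ∑ k ∈ Icc l t, dirichlet (2 ^ k) x

lemma abs_dirichletSum_binaryBlock_add_le {l t : ℕ} (h : l ≤ t) (x : G) :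
    |dirichletSum (binaryBlock l t) x| + 2 ^ l * |dirichlet (binaryBlock l t) x| ≤
      6 * blockMajorant l t x := by
  have hD : ∀ k ∈ Icc l t, 0 ≤ dirichlet (2 ^ k) x := fun k _ => dirichlet_two_pow_nonneg k x
  have hDt := single_le_sum hD (mem_Icc.2 ⟨h, le_rfl⟩)
  have hDl := single_le_sum hD (mem_Icc.2 ⟨le_rfl, h⟩)
  have hpow : (0 : ℝ) < 2 ^ l := by positivity
  have := mul_le_mul_of_nonneg_left (abs_dirichlet_binaryBlock_le h x) hpow.le
  rw [blockMajorant]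
  nlinarith [abs_dirichletSum_binaryBlock_le h x, dirichletSum_two_pow_nonneg l x,
    dirichletSum_two_pow_nonneg t x]

lemma abs_dirichletSum_sum_binaryBlock_le {s : ℕ} {l t : ℕ → ℕ} (hlt : ∀ i < s, l i ≤ t i)
    (hgap : ∀ i, i + 1 < s → t (i + 1) < l i) (x : G) :
    |dirichletSum (∑ i ∈ range s, binaryBlock (l i) (t i)) x| ≤
      6 * ∑ i ∈ range s, blockMajorant (l i) (t i) x := by
  induction s generalizing l t with
  | zero => simp [dirichletSum]
  | succ s ih =>
    set rest := ∑ i ∈ range s, binaryBlock (l (i + 1)) (t (i + 1))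
    have hrest : rest ≤ 2 ^ l 0 :=
      (sum_binaryBlock_lt_two_pow (fun i hi => hlt (i + 1) (by omega))
        (fun i hi => hgap (i + 1) (by omega)) (fun _ => hgap 0 (by omega))).le
    have hrestR : (rest : ℝ) ≤ 2 ^ l 0 := by exact_mod_cast hrest
    have hIH := ih (fun i hi => hlt (i + 1) (by omega)) (fun i hi => hgap (i + 1) (by omega))
    have hblock := abs_dirichletSum_binaryBlock_add_le (hlt 0 s.succ_pos) x
    rw [sum_range_succ', sum_range_succ', add_comm]
    refine (abs_dirichletSum_add_le (two_pow_dvd_binaryBlock _ _) hrest x).trans ?_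
    nlinarith [abs_nonneg (dirichlet (binaryBlock (l 0) (t 0)) x)]

end Walsh

/-- upper estimate for `|n K_n|` in terms of dyadic Dirichlet and Fejér
kernels, for `n` with binary block structure, with an absolute constant `c`. -/
theorem nK_upper_estimate :
    ∃ c : ℝ, 0 < c ∧ ∀ (s : ℕ) (l t : ℕ → ℕ),
      (∀ i < s, l i ≤ t i) → (∀ i, i + 1 < s → t (i + 1) + 2 ≤ l i) →
      ∀ x : G,
        |((∑ i ∈ Finset.range s, ∑ k ∈ Finset.Icc (l i) (t i), 2 ^ k : ℕ) : ℝ) *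
            fejer (∑ i ∈ Finset.range s, ∑ k ∈ Finset.Icc (l i) (t i), 2 ^ k) x| ≤
          c * ∑ i ∈ Finset.range s,
            ((2 : ℝ) ^ l i * fejer (2 ^ l i) x + (2 : ℝ) ^ t i * fejer (2 ^ t i) x +
              (2 : ℝ) ^ l i * ∑ k ∈ Finset.Icc (l i) (t i), dirichlet (2 ^ k) x) := by
  refine ⟨6, by norm_num, fun s l t hlt hgap x => ?_⟩
  simp only [Walsh.natCast_mul_fejer, Walsh.two_pow_mul_fejer_two_pow]
  exact Walsh.abs_dirichletSum_sum_binaryBlock_le hlt (fun i hi => by have := hgap i hi; omega) x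
end
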